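/- Let ẽ : ℝ³ → Fin 3 → ℝ³ be a smooth map such that for each x the vectors ẽ₁(x), ẽ₂(x), ẽ₃(x) form an orthonormal basis of ℝ³, and suppose ẽ_j(0) is the j-th standard basis vector. Let G : ℝ³ → Matrix 2 2 ℂ be smooth with G(x) ∈ SU(2) for all x and G(0) = I, and define a new frame by e_j^α(x) := (1/2)·Σ_k tr( s_j · G(x)* · s^k · G(x) ) · ẽ_k^α(x). For any smooth orthonormal frame f define its flat Weitzenböck coefficients Υ[f]^α_{βγ}(x) := Σ_j f_j^α(x)·∂f_j^γ/∂x^β(x), its torsion T[f]^α_{βγ} := Υ[f]^α_{βγ} − Υ[f]^α_{γβ}, its contorsion K[f]_{αβγ} := (1/2)(T[f]_{αβγ} + T[f]_{βαγ} + T[f]_{γαβ}), and the dual *K[f]_{αβ} := (1/2)·Σ_{μ,ν} K[f]_{μαν}·ε_{μνβ}. Then for each α ∈ {1,2,3}: ∂G/∂x^α(0) = −(i/2)·Σ_β ( *K[e]_{αβ}(0) − *K[ẽ]_{αβ}(0) )·s^β. -/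

import Mathlib

open Matrix

set_option maxHeartbeats 1000000

noncomputable section

/-- The three Pauli matrices. -/
def pauli : Fin 3 → Matrix (Fin 2) (Fin 2) ℂ
  | 0 => !![0, 1; 1, 0]
  | 1 => !![0, -Complex.I; Complex.I, 0]
  | 2 => !![1, 0; 0, -1]

/-- The Levi-Civita symbol with `ε 0 1 2 = 1`. -/
def eps (i j k : Fin 3) : ℝ :=
  ((j.val : ℝ) - (i.val : ℝ)) * ((k.val : ℝ) - (j.val : ℝ)) * ((k.val : ℝ) - (i.val : ℝ)) / 2

/-- Partial derivative in the direction `x^β` of a real-valued function on `ℝ³`. -/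
def pdR (β : Fin 3) (g : (Fin 3 → ℝ) → ℝ) (x : Fin 3 → ℝ) : ℝ :=
  fderiv ℝ g x (Pi.single β 1)

/-- Flat Weitzenböck coefficients `Υ[f]^α_{βγ}(x) = Σ_j f_j^α(x) ∂f_j^γ/∂x^β (x)`
of an orthonormal frame `f` on Euclidean `ℝ³`. -/
def weitz (f : (Fin 3 → ℝ) → Fin 3 → Fin 3 → ℝ) (x : Fin 3 → ℝ) (a b c : Fin 3) : ℝ :=
  ∑ j, f x j a * pdR b (fun y => f y j c) x

/-- Torsion `T[f]^α_{βγ} = Υ[f]^α_{βγ} − Υ[f]^α_{γβ}` of the Weitzenböck connection. -/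
def weitzTorsion (f : (Fin 3 → ℝ) → Fin 3 → Fin 3 → ℝ) (x : Fin 3 → ℝ) (a b c : Fin 3) : ℝ :=
  weitz f x a b c - weitz f x a c b

/-- Contorsion `K[f]_{αβγ} = (1/2)(T_{αβγ} + T_{βαγ} + T_{γαβ})`. -/
def weitzContorsion (f : (Fin 3 → ℝ) → Fin 3 → Fin 3 → ℝ) (x : Fin 3 → ℝ) (a b c : Fin 3) : ℝ :=
  (weitzTorsion f x a b c + weitzTorsion f x b a c + weitzTorsion f x c a b) / 2

/-- Hodge dual of the contorsion in its first and third indices: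
`*K[f]_{αβ} = (1/2) Σ_{μν} K[f]_{μαν} ε_{μνβ}`. -/
def weitzDualContorsion (f : (Fin 3 → ℝ) → Fin 3 → Fin 3 → ℝ) (x : Fin 3 → ℝ) (a b : Fin 3) : ℝ :=
  (∑ μ, ∑ ν, weitzContorsion f x μ a ν * eps μ ν b) / 2

def Dg (G : (Fin 3 → ℝ) → Matrix (Fin 2) (Fin 2) ℂ) (b : Fin 3) (i j : Fin 2) : ℂ :=
  fderiv ℝ (fun x => G x i j) 0 (Pi.single b 1)

lemma trace_expand (j k : Fin 3) (M : Matrix (Fin 2) (Fin 2) ℂ) :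
    Matrix.trace (pauli j * Mᴴ * pauli k * M) =
      ∑ i, ∑ l, ∑ m, ∑ n, pauli j i l * pauli k m n * ((starRingEnd ℂ) (M m l) * M n i) := by
  simp [Matrix.trace, Matrix.mul_apply, conjTranspose_apply, Fin.sum_univ_two, Matrix.diag]
  ring

lemma pauli_contr (j k : Fin 3) :
    ∑ i : Fin 2, ∑ l : Fin 2, ∑ m : Fin 2, ∑ n : Fin 2, pauli j i l * pauli k m n *
      ((starRingEnd ℂ) ((1 : Matrix (Fin 2) (Fin 2) ℂ) m l) * (1 : Matrix (Fin 2) (Fin 2) ℂ) n i)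
      = if j = k then 2 else 0 := by
  fin_cases j <;> fin_cases k <;>
    simp [pauli, Fin.sum_univ_two, Matrix.one_apply] <;> norm_num [Complex.ext_iff]

def Rv (G : (Fin 3 → ℝ) → Matrix (Fin 2) (Fin 2) ℂ) (b j c : Fin 3) : ℝ :=
  ((2⁻¹:ℂ) * ∑ i, ∑ l, ∑ m, ∑ n, pauli j i l * pauli c m n *
    ((if m = l then (1:ℂ) else 0) * Dg G b n i +
     (if n = i then (1:ℂ) else 0) * (starRingEnd ℂ) (Dg G b m l))).re

lemma key
    (G : (Fin 3 → ℝ) → Matrix (Fin 2) (Fin 2) ℂ)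
    (hG_smooth : ∀ i j : Fin 2, ContDiff ℝ (⊤ : ℕ∞) (fun x => G x i j))
    (hG_0 : G 0 = 1)
    (et : (Fin 3 → ℝ) → Fin 3 → Fin 3 → ℝ)
    (het_smooth : ContDiff ℝ (⊤ : ℕ∞) et)
    (het_0 : ∀ j α : Fin 3, et 0 j α = if j = α then 1 else 0)
    (e : (Fin 3 → ℝ) → Fin 3 → Fin 3 → ℝ)
    (he : ∀ x : Fin 3 → ℝ, ∀ j α : Fin 3,
      (e x j α : ℂ) =
        ∑ k, (2⁻¹ : ℂ) * Matrix.trace (pauli j * (G x)ᴴ * pauli k * G x) * (et x k α : ℂ))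
    (b j c : Fin 3) :
    pdR b (fun y => e y j c) 0 = pdR b (fun y => et y j c) 0 + Rv G b j c := by
  simp only [Rv]
  have hg : ∀ m l : Fin 2, HasFDerivAt (fun y => G y m l) (fderiv ℝ (fun y => G y m l) 0) 0 :=
    fun m l => (((hG_smooth m l).differentiable (by simp)) 0).hasFDerivAt
  have hgc : ∀ m l : Fin 2, HasFDerivAt (fun y => (starRingEnd ℂ) (G y m l))
      ((Complex.conjCLE : ℂ ≃L[ℝ] ℂ).toContinuousLinearMap.comp (fderiv ℝ (fun y => G y m l) 0)) 0 :=
    fun m l => ((Complex.conjCLE : ℂ ≃L[ℝ] ℂ).toContinuousLinearMap.hasFDerivAt).comp 0 (hg m l)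
  have hetc : ∀ k : Fin 3, HasFDerivAt (fun y => et y k c) (fderiv ℝ (fun y => et y k c) 0) 0 :=
    fun k => ((((contDiff_pi.mp ((contDiff_pi.mp het_smooth) k)) c).differentiable (by simp)) 0).hasFDerivAt
  have hetC : ∀ k : Fin 3, HasFDerivAt (fun y => ((et y k c : ℝ) : ℂ))
      (Complex.ofRealCLM.comp (fderiv ℝ (fun y => et y k c) 0)) 0 :=
    fun k => (Complex.ofRealCLM.hasFDerivAt).comp 0 (hetc k)
  have hF := HasFDerivAt.fun_sum (u := (Finset.univ : Finset (Fin 3))) (x := (0 : Fin 3 → ℝ))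
    (A := fun k y => (2⁻¹:ℂ) * (∑ i, ∑ l, ∑ m, ∑ n, pauli j i l * pauli k m n *
        ((starRingEnd ℂ) (G y m l) * G y n i)) * (et y k c : ℂ))
    (fun k _ =>
      ((HasFDerivAt.fun_sum (fun i _ => HasFDerivAt.fun_sum (fun l _ => HasFDerivAt.fun_sum (fun m _ =>
        HasFDerivAt.fun_sum (fun n _ =>
          (((hgc m l).fun_mul (hg n i)).const_mul (pauli j i l * pauli k m n)))))))).const_mul (2⁻¹:ℂ)
        |>.fun_mul (hetC k))
  have hfun : (fun y => e y j c) = ⇑Complex.reCLM ∘ (fun y => ∑ k, (2⁻¹:ℂ) * (∑ i, ∑ l, ∑ m, ∑ n, pauli j i l * pauli k m n *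
        ((starRingEnd ℂ) (G y m l) * G y n i)) * (et y k c : ℂ)) := by
    funext y
    have h2 : ((e y j c : ℝ) : ℂ) = ∑ k, (2⁻¹:ℂ) * (∑ i, ∑ l, ∑ m, ∑ n, pauli j i l * pauli k m n *
        ((starRingEnd ℂ) (G y m l) * G y n i)) * (et y k c : ℂ) := by
      rw [he y j c]; simp only [trace_expand]
    calc e y j c = ((e y j c : ℝ) : ℂ).re := by simp
    _ = _ := by rw [h2]; rfl
  have hre := Complex.reCLM.hasFDerivAt.comp (0 : Fin 3 → ℝ) hF
  rw [pdR, hfun, hre.fderiv]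
  simp only [ContinuousLinearMap.comp_apply, ContinuousLinearMap.coe_sum', Finset.sum_apply,
    ContinuousLinearMap.add_apply, ContinuousLinearMap.smul_apply, ContinuousLinearMap.coe_smul',
    Pi.smul_apply, ContinuousLinearMap.coe_comp', Function.comp_apply]
  rw [hG_0]
  simp only [pauli_contr]
  rw [Finset.sum_add_distrib, map_add]
  rw [Finset.sum_eq_single j (fun x _ hx => by simp [Ne.symm hx]) (by simp)]
  rw [Finset.sum_eq_single c (fun x _ hx => by simp [het_0, hx]) (by simp)]
  simp only [het_0, if_pos rfl, if_pos (rfl : j = j)]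
  simp only [if_true, smul_eq_mul, one_mul, Complex.ofReal_one, Matrix.one_apply,
    Complex.conjCLE_apply, Complex.reCLM_apply]
  norm_num [pdR, Dg, Complex.add_re, Complex.ofReal_re, mul_comm]

lemma pauli_trace (j k : Fin 3) :
    Matrix.trace (pauli j * pauli k) = if j = k then 2 else 0 := by
  fin_cases j <;> fin_cases k <;>
    simp [pauli, Matrix.trace_fin_two, Matrix.mul_apply, Fin.sum_univ_two] <;>
    norm_num [Complex.ext_iff]

lemma e_zero
    (G : (Fin 3 → ℝ) → Matrix (Fin 2) (Fin 2) ℂ) (hG_0 : G 0 = 1)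
    (et : (Fin 3 → ℝ) → Fin 3 → Fin 3 → ℝ)
    (het_0 : ∀ j α : Fin 3, et 0 j α = if j = α then 1 else 0)
    (e : (Fin 3 → ℝ) → Fin 3 → Fin 3 → ℝ)
    (he : ∀ x : Fin 3 → ℝ, ∀ j α : Fin 3,
      (e x j α : ℂ) =
        ∑ k, (2⁻¹ : ℂ) * Matrix.trace (pauli j * (G x)ᴴ * pauli k * G x) * (et x k α : ℂ))
    (j a : Fin 3) : e 0 j a = if j = a then 1 else 0 := by
  have h := he 0 j a
  rw [hG_0] at h
  rw [Finset.sum_eq_single a (fun x _ hx => by simp [het_0, hx]) (by simp)] at h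
  simp only [conjTranspose_one, mul_one, Matrix.mul_one, het_0, if_pos rfl,
    Complex.ofReal_one, mul_one] at h
  rw [pauli_trace] at h
  have h2 : ((e 0 j a : ℝ) : ℂ) = (((if j = a then (1:ℝ) else 0) : ℝ) : ℂ) := by
    rw [h]; split <;> norm_num
  exact_mod_cast h2

lemma Dg_trace
    (G : (Fin 3 → ℝ) → Matrix (Fin 2) (Fin 2) ℂ)
    (hG_smooth : ∀ i j : Fin 2, ContDiff ℝ (⊤ : ℕ∞) (fun x => G x i j))
    (hG_det : ∀ x : Fin 3 → ℝ, (G x).det = 1)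
    (hG_0 : G 0 = 1) (b : Fin 3) :
    Dg G b 0 0 + Dg G b 1 1 = 0 := by
  have hg : ∀ m l : Fin 2, HasFDerivAt (fun y => G y m l) (fderiv ℝ (fun y => G y m l) 0) 0 :=
    fun m l => (((hG_smooth m l).differentiable (by simp)) 0).hasFDerivAt
  have hd := (((hg 0 0).mul (hg 1 1)).sub ((hg 0 1).mul (hg 1 0)))
  have hconst : (fun y => G y 0 0 * G y 1 1 - G y 0 1 * G y 1 0) = fun _ => (1:ℂ) :=
    funext fun y => by rw [← Matrix.det_fin_two]; exact hG_det y
  change HasFDerivAt (fun y => G y 0 0 * G y 1 1 - G y 0 1 * G y 1 0) _ 0 at hd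
  rw [hconst] at hd
  have h0 := hd.unique (hasFDerivAt_const 1 0)
  have h1 := congrFun (congrArg DFunLike.coe h0) (Pi.single b 1)
  simp only [hG_0, Matrix.one_apply, ContinuousLinearMap.sub_apply, ContinuousLinearMap.add_apply,
    ContinuousLinearMap.smul_apply, ContinuousLinearMap.zero_apply] at h1
  simpa [Dg, smul_eq_mul, add_comm] using h1

lemma Dg_herm
    (G : (Fin 3 → ℝ) → Matrix (Fin 2) (Fin 2) ℂ)
    (hG_smooth : ∀ i j : Fin 2, ContDiff ℝ (⊤ : ℕ∞) (fun x => G x i j))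
    (hG_unitary : ∀ x : Fin 3 → ℝ, G x * (G x)ᴴ = 1)
    (hG_0 : G 0 = 1) (b : Fin 3) (i j : Fin 2) :
    Dg G b i j + (starRingEnd ℂ) (Dg G b j i) = 0 := by
  have hg : ∀ m l : Fin 2, HasFDerivAt (fun y => G y m l) (fderiv ℝ (fun y => G y m l) 0) 0 :=
    fun m l => (((hG_smooth m l).differentiable (by simp)) 0).hasFDerivAt
  have hgc : ∀ m l : Fin 2, HasFDerivAt (fun y => (starRingEnd ℂ) (G y m l))
      ((Complex.conjCLE : ℂ ≃L[ℝ] ℂ).toContinuousLinearMap.comp (fderiv ℝ (fun y => G y m l) 0)) 0 :=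
    fun m l => ((Complex.conjCLE : ℂ ≃L[ℝ] ℂ).toContinuousLinearMap.hasFDerivAt).comp 0 (hg m l)
  have hd := HasFDerivAt.sum (u := (Finset.univ : Finset (Fin 2))) (x := (0 : Fin 3 → ℝ))
    (A := fun k y => G y i k * (starRingEnd ℂ) (G y j k))
    (fun k _ => (hg i k).mul (hgc j k))
  have hconst : (fun y => ∑ k, G y i k * (starRingEnd ℂ) (G y j k)) =
      fun _ => ((1 : Matrix (Fin 2) (Fin 2) ℂ) i j) := funext fun y => by
    have := congrFun (congrFun (hG_unitary y) i) j
    simpa [Matrix.mul_apply, conjTranspose_apply] using this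
  rw [Finset.sum_fn] at hd
  rw [hconst] at hd
  have h0 := hd.unique (hasFDerivAt_const _ 0)
  have h1 := congrFun (congrArg DFunLike.coe h0) (Pi.single b 1)
  simp only [hG_0, Matrix.one_apply, ContinuousLinearMap.coe_sum', Finset.sum_apply,
    ContinuousLinearMap.add_apply, ContinuousLinearMap.smul_apply, ContinuousLinearMap.coe_comp',
    Function.comp_apply, ContinuousLinearMap.zero_apply, Complex.conjCLE_apply] at h1
  fin_cases i <;> fin_cases j <;>
    simpa [Dg, Fin.sum_univ_two, smul_eq_mul, add_comm] using h1

lemma Rv_val (G : (Fin 3 → ℝ) → Matrix (Fin 2) (Fin 2) ℂ) (b a c : Fin 3) :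
    Rv G b a c =
      ![![(Dg G b 0 0).re + (Dg G b 1 1).re,
          (Dg G b 1 1).im - (Dg G b 0 0).im,
          (Dg G b 0 1).re - (Dg G b 1 0).re],
        ![(Dg G b 0 0).im - (Dg G b 1 1).im,
          (Dg G b 0 0).re + (Dg G b 1 1).re,
          -((Dg G b 1 0).im + (Dg G b 0 1).im)],
        ![(Dg G b 1 0).re - (Dg G b 0 1).re,
          (Dg G b 1 0).im + (Dg G b 0 1).im,
          (Dg G b 0 0).re + (Dg G b 1 1).re]] a c := by
  fin_cases a <;> fin_cases c <;>
    norm_num [Rv, pauli, Fin.sum_univ_two, Complex.add_re, Complex.add_im,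
      Complex.mul_re, Complex.mul_im] <;> ring


theorem deriv_of_gauge_transformation
    (et : (Fin 3 → ℝ) → Fin 3 → Fin 3 → ℝ)
    (het_smooth : ContDiff ℝ (⊤ : ℕ∞) et)
    (het_on : ∀ x : Fin 3 → ℝ, ∀ j k : Fin 3,
      ∑ α, et x j α * et x k α = if j = k then 1 else 0)
    (het_0 : ∀ j α : Fin 3, et 0 j α = if j = α then 1 else 0)
    (G : (Fin 3 → ℝ) → Matrix (Fin 2) (Fin 2) ℂ)
    (hG_smooth : ∀ i j : Fin 2, ContDiff ℝ (⊤ : ℕ∞) (fun x => G x i j))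
    (hG_unitary : ∀ x : Fin 3 → ℝ, G x * (G x)ᴴ = 1)
    (hG_det : ∀ x : Fin 3 → ℝ, (G x).det = 1)
    (hG_0 : G 0 = 1)
    (e : (Fin 3 → ℝ) → Fin 3 → Fin 3 → ℝ)
    (he : ∀ x : Fin 3 → ℝ, ∀ j α : Fin 3,
      (e x j α : ℂ) =
        ∑ k, (2⁻¹ : ℂ) * Matrix.trace (pauli j * (G x)ᴴ * pauli k * G x) * (et x k α : ℂ)) :
    ∀ α : Fin 3,
      (Matrix.of fun i j : Fin 2 => fderiv ℝ (fun x => G x i j) 0 (Pi.single α 1)) =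
        (-(Complex.I) / 2) •
          ∑ β, ((weitzDualContorsion e 0 α β - weitzDualContorsion et 0 α β : ℝ) : ℂ) •
            pauli β := by
  intro α
  have hkey := key G hG_smooth hG_0 et het_smooth het_0 e he
  have he0 := e_zero G hG_0 et het_0 e he
  have htr := Dg_trace G hG_smooth hG_det hG_0
  have hherm := Dg_herm G hG_smooth hG_unitary hG_0
  have c1 : ∀ b, (Dg G b 0 0).re = 0 := fun b => by
    have h := congrArg Complex.re (hherm b 0 0); simp at h; linarith
  have c2 : ∀ b, (Dg G b 1 1).re = 0 := fun b => by
    have h := congrArg Complex.re (hherm b 1 1); simp at h; linarith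
  have c3 : ∀ b, (Dg G b 1 1).im = -(Dg G b 0 0).im := fun b => by
    have h := congrArg Complex.im (htr b); simp at h; linarith
  have c4 : ∀ b, (Dg G b 1 0).re = -(Dg G b 0 1).re := fun b => by
    have h := congrArg Complex.re (hherm b 0 1); simp at h; linarith
  have c5 : ∀ b, (Dg G b 1 0).im = (Dg G b 0 1).im := fun b => by
    have h := congrArg Complex.im (hherm b 0 1); simp at h; linarith
  have hw : ∀ (f : (Fin 3 → ℝ) → Fin 3 → Fin 3 → ℝ)
      (_ : ∀ j a : Fin 3, f 0 j a = if j = a then (1:ℝ) else 0) (a b c : Fin 3),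
      weitz f 0 a b c = pdR b (fun y => f y a c) 0 := by
    intro f hf0 a b c
    rw [weitz, Finset.sum_eq_single a (fun x _ hx => by simp [hf0, hx]) (by simp)]
    simp [hf0]
  have hwe : ∀ a b c : Fin 3, weitz e 0 a b c = pdR b (fun y => et y a c) 0 + Rv G b a c :=
    fun a b c => (hw e he0 a b c).trans (hkey b a c)
  have hwet : ∀ a b c : Fin 3, weitz et 0 a b c = pdR b (fun y => et y a c) 0 := hw et het_0
  have hDg : ∀ (b : Fin 3) (i j : Fin 2),
      fderiv ℝ (fun x => G x i j) 0 (Pi.single b 1) = Dg G b i j := fun _ _ _ => rfl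
  have hv := Rv_val G
  fin_cases α <;> ext i j <;> fin_cases i <;> fin_cases j <;>
  · simp only [Matrix.of_apply, hDg, Matrix.smul_apply, Matrix.sum_apply, Fin.sum_univ_three,
      weitzDualContorsion, weitzContorsion, weitzTorsion, hwe, hwet,
      Matrix.smul_apply, smul_eq_mul]
    simp only [hv, Matrix.cons_val_zero, Matrix.cons_val_one, Matrix.head_cons, Matrix.cons_val]
    norm_num [pauli, eps, Complex.ext_iff, Complex.mul_re, Complex.mul_im, c1, c2, c3, c4, c5, Matrix.cons_val, Matrix.cons_val_two, Matrix.tail_cons, Matrix.head_cons]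
    first
      | (constructor <;> ring)
      | ring
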